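/- Let (V, d_T) be a finite tree metric in which all pairwise distances between distinct pairs are distinct. Let E be a set of edges over V such that the graph (V, E) is connected, and let M = MST(E, d_T) be the minimum spanning tree of (V, E) with edge weights d_T. Suppose {v, u} ∈ E, {v, w} ∈ M, and u ≺ (v,w). Then the edge set M' = (M \ {{v,w}}) ∪ {{u,w}} is a spanning tree of V, and the total d_T-weight of M' is strictly smaller than the total d_T-weight of M. In particular, u lies in the same component as v after removing {v,w} from M. -/

import Mathlib

/-!
If `u` were cut off from `v` by deleting `{v,w}` from `M`, it would lie on `w`'s side, and
reconnecting the two sides by `{v,u} ∈ E` instead would give a spanning tree inside `E` that is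
lighter, since `d u v < d v w`; this contradicts minimality. So `u` lies on `v`'s side, and
reconnecting the sides by `{u,w}` gives a spanning tree that is lighter since `d u w < d v w`.
-/

/-- The tree metric: the weighted length of the unique path between `x` and `y`
in the tree `G` with edge weights `f`. -/
noncomputable def treeDist {W : Type} (G : SimpleGraph W) (hG : G.IsTree) (f : Sym2 W → ℝ)
    (x y : W) : ℝ :=
  ((hG.existsUnique_path x y).choose.edges.map f).sum

/-- `d` is a tree metric: it is the restriction to `V` of the path metric of a finite
weighted tree with positive edge weights. -/
def IsTreeMetric {V : Type} (d : V → V → ℝ) : Prop :=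
  ∃ (W : Type) (_ : Fintype W) (G : SimpleGraph W) (hG : G.IsTree) (f : Sym2 W → ℝ)
    (ι : V → W), (∀ e ∈ G.edgeSet, 0 < f e) ∧ Function.Injective ι ∧
      ∀ x y, d x y = treeDist G hG f (ι x) (ι y)

/-- All pairwise distances between distinct pairs are distinct: two distinct pairs can only
have equal distance if they are the same unordered pair. -/
def DistinctDists {V : Type} (d : V → V → ℝ) : Prop :=
  ∀ x y x' y' : V, x ≠ y → x' ≠ y' → d x y = d x' y' → s(x, y) = s(x', y')

/-- The weight of an unordered edge under the (symmetric) distance `d`. -/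
noncomputable def sym2Weight {V : Type} (d : V → V → ℝ) : Sym2 V → ℝ :=
  Sym2.lift ⟨fun x y => (d x y + d y x) / 2, fun _ _ => by ring⟩

/-- The total `d`-weight of a finite set of edges. -/
noncomputable def edgesWeight {V : Type} (d : V → V → ℝ) (E : Finset (Sym2 V)) : ℝ :=
  ∑ e ∈ E, sym2Weight d e

/-- `E` is the edge set of a spanning tree on `V`: it has no loops and the resulting
graph is connected and acyclic. -/
def IsSpanningTreeEdges {V : Type} (E : Set (Sym2 V)) : Prop :=
  (∀ e ∈ E, ¬ e.IsDiag) ∧ (SimpleGraph.fromEdgeSet E).IsTree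

/-- `M` is a minimum spanning tree using only edges from `Base`, with edge weights `d`:
it is a spanning tree contained in `Base` minimizing the total weight among all such
spanning trees.  Taking `Base = Set.univ` gives the MST over the complete graph on `V`. -/
def IsMSTOver {V : Type} [Fintype V] [DecidableEq V] (d : V → V → ℝ)
    (Base : Set (Sym2 V)) (M : Finset (Sym2 V)) : Prop :=
  ↑M ⊆ Base ∧ IsSpanningTreeEdges (↑M : Set (Sym2 V)) ∧
    ∀ E : Finset (Sym2 V), ↑E ⊆ Base → IsSpanningTreeEdges (↑E : Set (Sym2 V)) →
      edgesWeight d M ≤ edgesWeight d E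

lemma treeDist_comm {W : Type} (G : SimpleGraph W) (hG : G.IsTree) (f : Sym2 W → ℝ) (x y : W) :
    treeDist G hG f x y = treeDist G hG f y x := by
  have hxy := (hG.existsUnique_path x y).choose_spec
  have hyx := (hG.existsUnique_path y x).choose_spec
  have hrev : (hG.existsUnique_path x y).choose = (hG.existsUnique_path y x).choose.reverse :=
    (hxy.2 _ hyx.1.reverse).symm
  rw [treeDist, treeDist, hrev, SimpleGraph.Walk.edges_reverse, List.map_reverse,
    List.sum_reverse]

lemma IsTreeMetric.comm {V : Type} {d : V → V → ℝ} (hd : IsTreeMetric d) (x y : V) :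
    d x y = d y x := by
  obtain ⟨W, _, G, hG, f, ι, -, -, hdist⟩ := hd
  rw [hdist, hdist, treeDist_comm]

lemma sym2Weight_mk {V : Type} {d : V → V → ℝ} (hd : ∀ x y, d x y = d y x) (x y : V) :
    sym2Weight d s(x, y) = d x y := by
  simp only [sym2Weight, Sym2.lift_mk, hd y x]
  ring

lemma edgesWeight_insert_erase {V : Type} [DecidableEq V] (d : V → V → ℝ)
    {M : Finset (Sym2 V)} {e e' : Sym2 V} (he : e ∈ M) (he' : e' ∉ M.erase e) :
    edgesWeight d (insert e' (M.erase e)) =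
      edgesWeight d M - sym2Weight d e + sym2Weight d e' := by
  rw [edgesWeight, edgesWeight, Finset.sum_insert he', Finset.sum_erase_eq_sub he]
  ring

namespace SimpleGraph

variable {V : Type*} {G : SimpleGraph V}

lemma mk_notMem_of_not_reachable_fromEdgeSet {s : Set (Sym2 V)} {x y : V}
    (h : ¬(fromEdgeSet s).Reachable x y) : s(x, y) ∉ s := by
  intro hxy
  rcases eq_or_ne x y with rfl | hne
  · exact h .rfl
  · exact h ((fromEdgeSet_adj s).mpr ⟨hxy, hne⟩).reachable

lemma IsAcyclic.not_reachable_deleteEdges_of_adj (hG : G.IsAcyclic) {a b : V} (hab : G.Adj a b) :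
    ¬(G.deleteEdges {s(a, b)}).Reachable a b :=
  isBridge_iff.mp (isAcyclic_iff_forall_adj_isBridge.mp hG hab)

lemma Preconnected.reachable_deleteEdges_or (hG : G.Preconnected) (a b x : V) :
    (G.deleteEdges {s(a, b)}).Reachable x a ∨ (G.deleteEdges {s(a, b)}).Reachable x b := by
  set H := G.deleteEdges {s(a, b)}
  suffices ∀ y z (p : G.Walk y z), H.Reachable y z ∨ H.Reachable y a ∨ H.Reachable y b by
    obtain ⟨p⟩ := hG x a
    rcases this x a p with h | h | h
    exacts [.inl h, .inl h, .inr h]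
  intro y z p
  induction p with
  | nil => exact .inl .rfl
  | @cons y y' z hyy' _ ih =>
    by_cases he : s(y, y') = s(a, b)
    · rcases Sym2.eq_iff.mp he with ⟨rfl, -⟩ | ⟨rfl, -⟩
      exacts [.inr (.inl .rfl), .inr (.inr .rfl)]
    · have hadj : H.Adj y y' := by
        rw [deleteEdges_adj]
        exact ⟨hyy', he⟩
      rcases ih with h | h | h
      exacts [.inl (hadj.reachable.trans h), .inr (.inl (hadj.reachable.trans h)),
        .inr (.inr (hadj.reachable.trans h))]

lemma IsTree.deleteEdges_sup_edge (hG : G.IsTree) {a b c : V} (hab : G.Adj a b)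
    (hca : (G.deleteEdges {s(a, b)}).Reachable c a) :
    (G.deleteEdges {s(a, b)} ⊔ edge c b).IsTree := by
  set H := G.deleteEdges {s(a, b)}
  have hcb : ¬H.Reachable c b := fun h ↦
    hG.isAcyclic.not_reachable_deleteEdges_of_adj hab (hca.symm.trans h)
  have hne : c ≠ b := by
    rintro rfl
    exact hcb .rfl
  have hle : H ≤ H ⊔ edge c b := le_sup_left
  have hcb' : (H ⊔ edge c b).Adj c b := Or.inr (by simp [edge_adj, hne])
  have hreach_b : ∀ x, (H ⊔ edge c b).Reachable x b := fun x ↦ by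
    rcases hG.1.preconnected.reachable_deleteEdges_or a b x with h | h
    · exact ((h.trans hca.symm).mono hle).trans hcb'.reachable
    · exact h.mono hle
  refine ⟨?_, (hG.isAcyclic.anti (deleteEdges_le _)).sup_edge_of_not_reachable hcb⟩
  have := hG.1.nonempty
  exact connected_iff _ |>.mpr ⟨fun x y ↦ (hreach_b x).trans (hreach_b y).symm, inferInstance⟩

end SimpleGraph

open SimpleGraph

namespace IsSpanningTreeEdges

variable {V : Type} {S : Set (Sym2 V)} {a b c : V}

lemma adj_of_mem (hS : IsSpanningTreeEdges S) (hab : s(a, b) ∈ S) : (fromEdgeSet S).Adj a b :=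
  (fromEdgeSet_adj S).mpr ⟨hab, by simpa using hS.1 _ hab⟩

lemma not_reachable_deleteEdges (hS : IsSpanningTreeEdges S) (hab : s(a, b) ∈ S) :
    ¬((fromEdgeSet S).deleteEdges {s(a, b)}).Reachable a b :=
  hS.2.isAcyclic.not_reachable_deleteEdges_of_adj (hS.adj_of_mem hab)

lemma mk_notMem_diff (hS : IsSpanningTreeEdges S) (hab : s(a, b) ∈ S)
    (hca : ((fromEdgeSet S).deleteEdges {s(a, b)}).Reachable c a) :
    s(c, b) ∉ S \ {s(a, b)} :=
  mk_notMem_of_not_reachable_fromEdgeSet fun hcb ↦ hS.not_reachable_deleteEdges hab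
    (hca.symm.trans (by rwa [deleteEdges_fromEdgeSet]))

lemma insert_diff (hS : IsSpanningTreeEdges S) (hab : s(a, b) ∈ S)
    (hca : ((fromEdgeSet S).deleteEdges {s(a, b)}).Reachable c a) :
    IsSpanningTreeEdges (insert s(c, b) (S \ {s(a, b)})) := by
  refine ⟨?_, ?_⟩
  · rintro e (rfl | ⟨he, -⟩)
    · have hcb : c ≠ b := by
        rintro rfl
        exact hS.not_reachable_deleteEdges hab hca.symm
      simpa using hcb
    · exact hS.1 e he
  · rw [Set.insert_eq, fromEdgeSet_union, ← deleteEdges_fromEdgeSet, sup_comm]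
    exact hS.2.deleteEdges_sup_edge (hS.adj_of_mem hab) hca

end IsSpanningTreeEdges

lemma IsMSTOver.sym2Weight_le_of_reachable {V : Type} [Fintype V] [DecidableEq V]
    {d : V → V → ℝ} {Base : Set (Sym2 V)} {M : Finset (Sym2 V)} (hM : IsMSTOver d Base M)
    {a b c : V} (hab : s(a, b) ∈ M) (hcb : s(c, b) ∈ Base)
    (hca : ((fromEdgeSet (M : Set (Sym2 V))).deleteEdges {s(a, b)}).Reachable c a) :
    sym2Weight d s(a, b) ≤ sym2Weight d s(c, b) := by
  have hnotMem := hM.2.1.mk_notMem_diff hab hca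
  have htree := hM.2.1.insert_diff hab hca
  rw [← Finset.coe_erase, Finset.mem_coe] at hnotMem
  rw [← Finset.coe_erase, ← Finset.coe_insert] at htree
  have hsub : (↑(insert s(c, b) (M.erase s(a, b))) : Set (Sym2 V)) ⊆ Base := by
    rw [Finset.coe_insert]
    exact Set.insert_subset hcb ((Finset.coe_subset.mpr (M.erase_subset _)).trans hM.1)
  have hle := hM.2.2 _ hsub htree
  rw [edgesWeight_insert_erase d hab hnotMem] at hle
  linarith

theorem mst_swap_improves_general {V : Type} [Fintype V] [DecidableEq V] (d : V → V → ℝ)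
    (htm : IsTreeMetric d) (E : Set (Sym2 V))
    (M : Finset (Sym2 V)) (hM : IsMSTOver d E M)
    (u v w : V) (huE : s(v, u) ∈ E) (hwM : s(v, w) ∈ M)
    (hprec : d u v < d v w ∧ d u w < d v w) :
    IsSpanningTreeEdges (↑(insert s(u, w) (M.erase s(v, w))) : Set (Sym2 V)) ∧
      edgesWeight d (insert s(u, w) (M.erase s(v, w))) < edgesWeight d M ∧
      (SimpleGraph.fromEdgeSet (↑(M.erase s(v, w)) : Set (Sym2 V))).Reachable u v := by
  have hcomm := htm.comm
  have hMtree := hM.2.1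
  rw [Finset.coe_insert, Finset.coe_erase, ← deleteEdges_fromEdgeSet]
  have huv : ((fromEdgeSet (M : Set (Sym2 V))).deleteEdges {s(v, w)}).Reachable u v := by
    refine (hMtree.2.1.preconnected.reachable_deleteEdges_or v w u).resolve_right fun huw ↦ ?_
    have hle := hM.sym2Weight_le_of_reachable (a := w) (b := v) (c := u)
      (by rwa [Sym2.eq_swap]) (by rwa [Sym2.eq_swap]) (by rwa [Sym2.eq_swap])
    rw [sym2Weight_mk hcomm, sym2Weight_mk hcomm] at hle
    linarith [hcomm w v, hprec.1]
  have huw := hMtree.mk_notMem_diff hwM huv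
  rw [← Finset.coe_erase, Finset.mem_coe] at huw
  refine ⟨hMtree.insert_diff hwM huv, ?_, huv⟩
  rw [edgesWeight_insert_erase d hwM huw, sym2Weight_mk hcomm, sym2Weight_mk hcomm]
  linarith [hprec.2]

/-- Let `M` be the MST of a connected edge set `E` over a tree metric with
pairwise distinct distances. If `{v,u} ∈ E`, `{v,w} ∈ M` and `u ≺ (v,w)`, then swapping
`{v,w}` for `{u,w}` in `M` again yields a spanning tree, of strictly smaller total weight;
in particular `u` is in the same component as `v` after removing `{v,w}` from `M`. -/
theorem mst_swap_improves {V : Type} [Fintype V] [DecidableEq V] (d : V → V → ℝ)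
    (htm : IsTreeMetric d) (hdd : DistinctDists d)
    (E : Set (Sym2 V)) (hconn : (SimpleGraph.fromEdgeSet E).Connected)
    (M : Finset (Sym2 V)) (hM : IsMSTOver d E M)
    (u v w : V) (huE : s(v, u) ∈ E) (hwM : s(v, w) ∈ M)
    (hprec : d u v < d v w ∧ d u w < d v w) :
    IsSpanningTreeEdges (↑(insert s(u, w) (M.erase s(v, w))) : Set (Sym2 V)) ∧
      edgesWeight d (insert s(u, w) (M.erase s(v, w))) < edgesWeight d M ∧
      (SimpleGraph.fromEdgeSet (↑(M.erase s(v, w)) : Set (Sym2 V))).Reachable u v :=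
  mst_swap_improves_general d htm E M hM u v w huE hwM hprec
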